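/- arXiv:2408.14017 — 5 statements merged into one kernel-verified Lean document; each statement's English description precedes it below -/
import Mathlib

section
/- For every natural number m, if there exists a work item i ∈ [n] such that the number of writes not visible to i (i.e., |𝒲 − W_i| where W_i = {w_j : w_j → x_i} and 𝒲 = {w_1,...,w_n}) is at most m, then there exists a work item j ∈ [n] that succeeds, where succeeds(j) means: every read r with item(r) = j and tgt(r) = DB_k (for any k ∈ [n]) satisfies n_k ∈ tuples(r). -/
/-- For every natural number `m`, if there exists a work item `i`
such that the number of writes not visible to `i` (those `w j` with
`¬ hb (w j) (x i)`) is at most `m`, then there exists a work item `j` that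
succeeds: every read in work item `j` targeting `DB k` observes tuple `tup k`. -/
theorem eager_key_completeness
    {E DBT Tuple Read : Type} (hb : E → E → Prop)
    (hb_trans : Transitive hb) (hb_irrefl : ∀ e, ¬ hb e e)
    {n : ℕ} (w x : Fin n → E) (db : Fin n → DBT) (tup : Fin n → Tuple)
    (rev : Read → E) (item : Read → Fin n) (tgt : Read → DBT)
    (tuples : Read → Set Tuple)
    (visibleWrites : ∀ (i : Fin n) (r : Read),
      hb (w i) (rev r) → tgt r = db i → tup i ∈ tuples r)
    (writesPrecedeDequeues : ∀ i : Fin n, hb (w i) (x i))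
    (dequeuesPrecedeReads : ∀ r : Read, hb (x (item r)) (rev r))
    (linearizableRelations : ∀ (i : Fin n) (r : Read),
      tgt r = db i → hb (rev r) (w i) ∨ hb (w i) (rev r)) :
    ∀ m : ℕ,
      (∃ i : Fin n, Nat.card {j : Fin n // ¬ hb (w j) (x i)} ≤ m) →
      ∃ j : Fin n, ∀ (k : Fin n) (r : Read),
        item r = j → tgt r = db k → tup k ∈ tuples r := by
  intro m
  induction m with
  | zero =>
    rintro ⟨i, hi⟩
    have hall : ∀ j, hb (w j) (x i) := by
      intro j
      by_contra h
      have hne : Nonempty {j : Fin n // ¬ hb (w j) (x i)} := ⟨⟨j, h⟩⟩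
      have := Nat.card_pos (α := {j : Fin n // ¬ hb (w j) (x i)})
      omega
    refine ⟨i, fun k r hr ht => ?_⟩
    exact visibleWrites k r (hb_trans (hall k) (hr ▸ dequeuesPrecedeReads r)) ht
  | succ m ih =>
    rintro ⟨i, hi⟩
    by_cases hs : ∀ (k : Fin n) (r : Read), item r = i → tgt r = db k → tup k ∈ tuples r
    · exact ⟨i, hs⟩
    · push_neg at hs
      obtain ⟨k, r, hri, hrt, hnot⟩ := hs
      have hxr : hb (x i) (rev r) := hri ▸ dequeuesPrecedeReads r
      have hwk : ¬ hb (w k) (rev r) := fun h => hnot (visibleWrites k r h hrt)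
      have hrw : hb (rev r) (w k) := (linearizableRelations k r hrt).resolve_right hwk
      have hsub : {j : Fin n | ¬ hb (w j) (x k)} ⊆ {j : Fin n | ¬ hb (w j) (x i)} := by
        intro j hj hji
        exact hj (hb_trans (hb_trans (hb_trans hji hxr) hrw) (writesPrecedeDequeues k))
      have hk_in : k ∈ {j : Fin n | ¬ hb (w j) (x i)} := fun h => hwk (hb_trans h hxr)
      have hk_out : k ∉ {j : Fin n | ¬ hb (w j) (x k)} := fun h => h (writesPrecedeDequeues k)
      have hss : {j : Fin n | ¬ hb (w j) (x k)} ⊂ {j : Fin n | ¬ hb (w j) (x i)} :=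
        ⟨hsub, fun h => hk_out (h hk_in)⟩
      have hlt : ({j : Fin n | ¬ hb (w j) (x k)}).ncard <
          ({j : Fin n | ¬ hb (w j) (x i)}).ncard :=
        Set.ncard_lt_ncard hss (Set.toFinite _)
      have e1 : Nat.card {j : Fin n // ¬ hb (w j) (x k)} =
          ({j : Fin n | ¬ hb (w j) (x k)}).ncard := Nat.card_coe_set_eq _
      have e2 : Nat.card {j : Fin n // ¬ hb (w j) (x i)} =
          ({j : Fin n | ¬ hb (w j) (x i)}).ncard := Nat.card_coe_set_eq _
      exact ih ⟨k, by omega⟩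
end

section
/- There exists a work item j ∈ [n] such that succeeds(j) holds; that is, under the four concurrency axioms, at least one of the n work items observes all n writes and hence derives the head fact. -/
/-- Under the four concurrency axioms (with `n ≥ 1`, and assuming
that any failing work item has a witnessing read), there exists a work item `j`
that succeeds, i.e., observes all `n` writes. -/
theorem eager_some_item_succeeds
    {E DBT Tuple Read : Type} (hb : E → E → Prop)
    (hb_trans : Transitive hb) (hb_irrefl : ∀ e, ¬ hb e e)
    {n : ℕ} (hn : 0 < n)
    (w x : Fin n → E) (db : Fin n → DBT) (tup : Fin n → Tuple)
    (rev : Read → E) (item : Read → Fin n) (tgt : Read → DBT)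
    (tuples : Read → Set Tuple)
    (visibleWrites : ∀ (i : Fin n) (r : Read),
      hb (w i) (rev r) → tgt r = db i → tup i ∈ tuples r)
    (writesPrecedeDequeues : ∀ i : Fin n, hb (w i) (x i))
    (dequeuesPrecedeReads : ∀ r : Read, hb (x (item r)) (rev r))
    (linearizableRelations : ∀ (i : Fin n) (r : Read),
      tgt r = db i → hb (rev r) (w i) ∨ hb (w i) (rev r))
    (witnessingRead : ∀ i : Fin n,
      ¬ (∀ (k : Fin n) (r : Read), item r = i → tgt r = db k → tup k ∈ tuples r) →
      ∃ (k : Fin n) (r : Read), item r = i ∧ tgt r = db k ∧ tup k ∉ tuples r) :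
    ∃ j : Fin n, ∀ (k : Fin n) (r : Read),
      item r = j → tgt r = db k → tup k ∈ tuples r := by
  by_contra hcon
  choose k r h1 h2 h3 using fun j => witnessingRead j (fun h => hcon ⟨j, h⟩)
  have key : ∀ i, hb (w i) (w (k i)) := by
    intro i
    have hwr : hb (w i) (rev (r i)) := by
      have hd := dequeuesPrecedeReads (r i)
      rw [h1 i] at hd
      exact hb_trans (writesPrecedeDequeues i) hd
    have hlin := linearizableRelations (k i) (r i) (h2 i)
    rcases hlin with h | h
    · exact hb_trans hwr h
    · exact absurd (visibleWrites (k i) (r i) h (h2 i)) (h3 i)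
  set z : Fin n := ⟨0, hn⟩
  have chain : ∀ a b, a < b → hb (w (k^[a] z)) (w (k^[b] z)) := by
    intro a b hab
    induction b with
    | zero => omega
    | succ b ih =>
      rcases Nat.lt_succ_iff_lt_or_eq.mp hab with h | h
      · have := ih h
        have h2' := key (k^[b] z)
        rw [Function.iterate_succ_apply']
        exact hb_trans this h2'
      · subst h
        rw [Function.iterate_succ_apply']
        exact key _
  obtain ⟨a, b, hne, heq⟩ := Finite.exists_ne_map_eq_of_infinite (fun m : ℕ => k^[m] z)
  rcases hne.lt_or_gt with h | h
  · exact hb_irrefl _ (heq ▸ chain a b h)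
  · exact hb_irrefl _ (heq ▸ chain b a h)
end

section
/- If work item i fails to observe write w_k (i.e., some read r with item(r) = i and tgt(r) = DB_k satisfies n_k ∉ tuples(r)), then the set of writes visible to work item i is a strict subset of the set of writes visible to work item k: W_i ⊂ W_k. -/
/-- If work item `i` fails to observe write `w k` (some read `r`
with `item r = i` and `tgt r = DB k` satisfies `tup k ∉ tuples r`), then the
set of writes visible to work item `i` is a strict subset of the set of writes
visible to work item `k`: `W i ⊂ W k`. -/
theorem eager_visible_sets_strict_subset
    {E DBT Tuple Read : Type} (hb : E → E → Prop)
    (hb_trans : Transitive hb) (hb_irrefl : ∀ e, ¬ hb e e)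
    {n : ℕ} (w x : Fin n → E) (db : Fin n → DBT) (tup : Fin n → Tuple)
    (rev : Read → E) (item : Read → Fin n) (tgt : Read → DBT)
    (tuples : Read → Set Tuple)
    (visibleWrites : ∀ (i : Fin n) (r : Read),
      hb (w i) (rev r) → tgt r = db i → tup i ∈ tuples r)
    (writesPrecedeDequeues : ∀ i : Fin n, hb (w i) (x i))
    (dequeuesPrecedeReads : ∀ r : Read, hb (x (item r)) (rev r))
    (linearizableRelations : ∀ (i : Fin n) (r : Read),
      tgt r = db i → hb (rev r) (w i) ∨ hb (w i) (rev r))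
    (i k : Fin n) (r : Read)
    (hitem : item r = i) (htgt : tgt r = db k) (hmiss : tup k ∉ tuples r) :
    {j : Fin n | hb (w j) (x i)} ⊂ {j : Fin n | hb (w j) (x k)} := by
  have hxir : hb (x i) (rev r) := hitem ▸ dequeuesPrecedeReads r
  have hnk : ¬ hb (w k) (rev r) := fun h => hmiss (visibleWrites k r h htgt)
  have hrk : hb (rev r) (w k) := (linearizableRelations k r htgt).resolve_right hnk
  have hik : hb (x i) (x k) :=
    hb_trans (hb_trans hxir hrk) (writesPrecedeDequeues k)
  constructor
  · intro j hj
    exact hb_trans hj hik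
  · intro hsub
    have : hb (w k) (x i) := hsub (writesPrecedeDequeues k)
    exact hnk (hb_trans this hxir)
end

section
/- Under the concurrency axioms, if a read r in work item i fails to observe write w_k (n_k ∉ tuples(r) where tgt(r) = DB_k and item(r) = i), then x_i → x_k, i.e., work item i was dequeued happens-before work item k was dequeued. -/
/-- If a read `r` in work item `i` fails to observe write `w k`,
then `x i → x k`: work item `i` was dequeued happens-before work item `k` was
dequeued. -/
theorem eager_dequeue_order
    {E DBT Tuple Read : Type} (hb : E → E → Prop)
    (hb_trans : Transitive hb) (hb_irrefl : ∀ e, ¬ hb e e)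
    {n : ℕ} (w x : Fin n → E) (db : Fin n → DBT) (tup : Fin n → Tuple)
    (rev : Read → E) (item : Read → Fin n) (tgt : Read → DBT)
    (tuples : Read → Set Tuple)
    (visibleWrites : ∀ (i : Fin n) (r : Read),
      hb (w i) (rev r) → tgt r = db i → tup i ∈ tuples r)
    (writesPrecedeDequeues : ∀ i : Fin n, hb (w i) (x i))
    (dequeuesPrecedeReads : ∀ r : Read, hb (x (item r)) (rev r))
    (linearizableRelations : ∀ (i : Fin n) (r : Read),
      tgt r = db i → hb (rev r) (w i) ∨ hb (w i) (rev r))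
    (i k : Fin n) (r : Read)
    (hitem : item r = i) (htgt : tgt r = db k) (hmiss : tup k ∉ tuples r) :
    hb (x i) (x k) := by
  have hrw : hb (rev r) (w k) := by
    rcases linearizableRelations k r htgt with h | h
    · exact h
    · exact absurd (visibleWrites k r h htgt) hmiss
  have hxr : hb (x i) (rev r) := hitem ▸ dequeuesPrecedeReads r
  exact hb_trans hxr (hb_trans hrw (writesPrecedeDequeues k))
end

section
/- Semi-naive evaluation is sound with respect to derivation trees: every fact in S_i (the set computed after i iterations of semi-naive evaluation for a stratum) admits a derivation tree of height at most i over the base facts. -/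
/-- Derivation trees of bounded height (see the context): `Deriv base rule a h`
means fact `a` has a derivation tree of height at most `h` over the base facts. -/
inductive Deriv {F : Type} (base : Set F) (rule : Finset F → Finset F → F → Prop) :
    F → ℕ → Prop
  | step (bp rp : Finset F) (c : F) (h : ℕ) :
      rule bp rp c → ↑bp ⊆ base →
      (∀ p ∈ rp, Deriv base rule p h) → Deriv base rule c (h + 1)
  | mono (a : F) (h : ℕ) : Deriv base rule a h → Deriv base rule a (h + 1)

/-- Semi-naive evaluation. -/
def semiNaive {F : Type} (base : Set F) (rule : Finset F → Finset F → F → Prop) :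
    ℕ → Set F
  | 0 => ∅
  | i + 1 => semiNaive base rule i ∪
      {c | ∃ bp rp : Finset F, rule bp rp c ∧ ↑bp ⊆ base ∧ ↑rp ⊆ semiNaive base rule i}

/-- semi-naive evaluation is sound — every fact in `S i` admits a
derivation tree of height at most `i` over the base facts. -/
theorem semiNaive_sound {F : Type} (base : Set F)
    (rule : Finset F → Finset F → F → Prop) (a : F) (i : ℕ)
    (ha : a ∈ semiNaive base rule i) : Deriv base rule a i := by
  induction i generalizing a with
  | zero => cases ha
  | succ n ih =>
    rcases ha with h | ⟨bp, rp, hr, hb, hrp⟩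
    · exact Deriv.mono a n (ih a h)
    · exact Deriv.step bp rp a n hr hb (fun p hp => ih p (hrp hp))
end
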